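/- Let 𝒳, 𝒜 be nonempty finite types, p_X a probability mass function on 𝒳, and ℓ : 𝒳 × 𝒜 → ℝ a nonnegative loss function. The value of Shannon's information V_I(R) = min_a Σ_x p_X(x)ℓ(x,a) − inf { Σ_{x,a} p_X(x) p_{A|X}(a|x) ℓ(x,a) : I(p_X, p_{A|X}) ≤ R } is concave on [0, ∞): for all R₁, R₂ ≥ 0 and λ ∈ [0,1], V_I(λ R₁ + (1−λ) R₂) ≥ λ V_I(R₁) + (1−λ) V_I(R₂). -/

import Mathlib

open Finset Real

/-- A probability mass function on a finite type. -/
def IsPMF {Z : Type*} [Fintype Z] (p : Z → ℝ) : Prop :=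
  (∀ z, 0 ≤ p z) ∧ ∑ z, p z = 1

/-- A channel from `X` to `A`: a family of pmfs on `A` indexed by `X`. -/
def IsChannel {X A : Type*} [Fintype X] [Fintype A] (W : X → A → ℝ) : Prop :=
  ∀ x, IsPMF (W x)

/-- Expected loss `Σ_{x,a} p_X(x) p_{A|X}(a|x) ℓ(x,a)`. -/
noncomputable def expLoss {X A : Type*} [Fintype X] [Fintype A]
    (pX : X → ℝ) (ℓ : X → A → ℝ) (W : X → A → ℝ) : ℝ :=
  ∑ x, ∑ a, pX x * W x a * ℓ x a

/-- Shannon's mutual information `I(p_X, p_{A|X})`, with the `0 log 0 = 0` convention. -/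
noncomputable def mutualInfo {X A : Type*} [Fintype X] [Fintype A]
    (pX : X → ℝ) (W : X → A → ℝ) : ℝ :=
  ∑ x, ∑ a, if pX x * W x a = 0 then 0
    else pX x * W x a * Real.log (W x a / (∑ x', pX x' * W x' a))

/-- The value of Shannon's information `V_I(R)`. -/
noncomputable def shannonVoI {X A : Type*} [Fintype X] [Fintype A]
    (pX : X → ℝ) (ℓ : X → A → ℝ) (R : ℝ) : ℝ :=
  (⨅ a, ∑ x, pX x * ℓ x a) -
    sInf (expLoss pX ℓ '' {p : X → A → ℝ | IsChannel p ∧ mutualInfo pX p ≤ R})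

/-! Mutual information is convex in the channel for a fixed input law: termwise this is the
log-sum inequality, i.e. joint convexity of `(u, v) ↦ u log (u / v)`, the perspective of
`x ↦ x log x`. Channels form a convex set and the expected loss is linear in the channel, so the
least expected loss under the constraint `I ≤ R` is convex in `R`, and `V_I` is a constant minus
it. -/

open Set

section SublevelInfimum

variable {E : Type*} [AddCommMonoid E] [SMul ℝ E] {s : Set E} {f g : E → ℝ}

theorem ConvexOn.sInf_image_sublevel (hf : ConvexOn ℝ s f) (hg : ConvexOn ℝ s g)
    (hbdd : BddBelow (g '' s)) {x₀ : E} (hx₀ : x₀ ∈ s) :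
    ConvexOn ℝ (Ici (f x₀)) fun r => sInf (g '' {x | x ∈ s ∧ f x ≤ r}) := by
  refine ⟨convex_Ici _, fun r₁ hr₁ r₂ hr₂ a b ha hb hab => ?_⟩
  have hne : ∀ r ∈ Ici (f x₀), (g '' {x | x ∈ s ∧ f x ≤ r}).Nonempty :=
    fun r hr => ⟨_, x₀, ⟨hx₀, hr⟩, rfl⟩
  have hbdd' : ∀ r, BddBelow (g '' {x | x ∈ s ∧ f x ≤ r}) :=
    fun r => hbdd.mono (image_mono fun x hx => hx.1)
  simp only [smul_eq_mul]
  refine le_of_forall_pos_le_add fun ε hε => ?_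
  obtain ⟨_, ⟨x₁, ⟨hx₁s, hx₁f⟩, rfl⟩, hx₁⟩ := Real.lt_sInf_add_pos (hne r₁ hr₁) hε
  obtain ⟨_, ⟨x₂, ⟨hx₂s, hx₂f⟩, rfl⟩, hx₂⟩ := Real.lt_sInf_add_pos (hne r₂ hr₂) hε
  have hmem : a • x₁ + b • x₂ ∈ {x | x ∈ s ∧ f x ≤ a * r₁ + b * r₂} := by
    refine ⟨hf.1 hx₁s hx₂s ha hb hab, (hf.2 hx₁s hx₂s ha hb hab).trans ?_⟩
    simp only [smul_eq_mul]
    gcongr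
  calc sInf (g '' {x | x ∈ s ∧ f x ≤ a * r₁ + b * r₂})
      ≤ g (a • x₁ + b • x₂) := csInf_le (hbdd' _) (mem_image_of_mem g hmem)
    _ ≤ a * g x₁ + b * g x₂ := hg.2 hx₁s hx₂s ha hb hab
    _ ≤ a * (sInf (g '' {x | x ∈ s ∧ f x ≤ r₁}) + ε)
        + b * (sInf (g '' {x | x ∈ s ∧ f x ≤ r₂}) + ε) := by gcongr
    _ = a * sInf (g '' {x | x ∈ s ∧ f x ≤ r₁})
        + b * sInf (g '' {x | x ∈ s ∧ f x ≤ r₂}) + ε := by linear_combination ε * hab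

end SublevelInfimum

-- `h₁`, `h₂` rule out the junk value `u * log (u / 0) = 0`, which would break the inequality.
theorem mul_log_div_add_le {u₁ u₂ v₁ v₂ : ℝ} (hu₁ : 0 ≤ u₁) (hu₂ : 0 ≤ u₂)
    (hv₁ : 0 ≤ v₁) (hv₂ : 0 ≤ v₂) (h₁ : u₁ ≠ 0 → 0 < v₁) (h₂ : u₂ ≠ 0 → 0 < v₂) :
    (u₁ + u₂) * log ((u₁ + u₂) / (v₁ + v₂)) ≤ u₁ * log (u₁ / v₁) + u₂ * log (u₂ / v₂) := by
  rcases hv₁.eq_or_lt with rfl | hv₁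
  · obtain rfl : u₁ = 0 := not_imp_comm.1 h₁ (lt_irrefl 0)
    simp
  rcases hv₂.eq_or_lt with rfl | hv₂
  · obtain rfl : u₂ = 0 := not_imp_comm.1 h₂ (lt_irrefl 0)
    simp
  have hv : 0 < v₁ + v₂ := by positivity
  -- Jensen for `x ↦ x log x` at the points `uᵢ / vᵢ` with weights `vᵢ / (v₁ + v₂)`
  have key := convexOn_mul_log.2 (mem_Ici.2 (div_nonneg hu₁ hv₁.le))
    (mem_Ici.2 (div_nonneg hu₂ hv₂.le)) (div_nonneg hv₁.le hv.le) (div_nonneg hv₂.le hv.le)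
    (by field_simp)
  simp only [smul_eq_mul] at key
  have e₁ : v₁ / (v₁ + v₂) * (u₁ / v₁) + v₂ / (v₁ + v₂) * (u₂ / v₂) = (u₁ + u₂) / (v₁ + v₂) := by
    field_simp
  rw [e₁] at key
  calc (u₁ + u₂) * log ((u₁ + u₂) / (v₁ + v₂))
      = (v₁ + v₂) * ((u₁ + u₂) / (v₁ + v₂) * log ((u₁ + u₂) / (v₁ + v₂))) := by field_simp
    _ ≤ (v₁ + v₂) * (v₁ / (v₁ + v₂) * (u₁ / v₁ * log (u₁ / v₁))
        + v₂ / (v₁ + v₂) * (u₂ / v₂ * log (u₂ / v₂))) := by gcongr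
    _ = u₁ * log (u₁ / v₁) + u₂ * log (u₂ / v₂) := by field_simp

theorem mul_log_div_mul_left (c u v : ℝ) :
    c * u * log (c * u / (c * v)) = c * (u * log (u / v)) := by
  rcases eq_or_ne c 0 with rfl | hc
  · simp
  · rw [mul_div_mul_left _ _ hc, mul_assoc]

theorem mul_log_div_convex_combination {a b u₁ u₂ v₁ v₂ : ℝ} (ha : 0 ≤ a) (hb : 0 ≤ b)
    (hu₁ : 0 ≤ u₁) (hu₂ : 0 ≤ u₂) (hv₁ : 0 ≤ v₁) (hv₂ : 0 ≤ v₂)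
    (h₁ : u₁ ≠ 0 → 0 < v₁) (h₂ : u₂ ≠ 0 → 0 < v₂) :
    (a * u₁ + b * u₂) * log ((a * u₁ + b * u₂) / (a * v₁ + b * v₂))
      ≤ a * (u₁ * log (u₁ / v₁)) + b * (u₂ * log (u₂ / v₂)) := by
  rw [← mul_log_div_mul_left a, ← mul_log_div_mul_left b]
  exact mul_log_div_add_le (by positivity) (by positivity) (by positivity) (by positivity)
    (fun h => mul_pos (ha.lt_of_ne' (left_ne_zero_of_mul h)) (h₁ (right_ne_zero_of_mul h)))
    (fun h => mul_pos (hb.lt_of_ne' (left_ne_zero_of_mul h)) (h₂ (right_ne_zero_of_mul h)))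

section Channel

variable {X A : Type*} [Fintype X] [Fintype A]

theorem convex_setOf_isChannel : Convex ℝ {W : X → A → ℝ | IsChannel W} :=
  fun _ h₁ _ h₂ _ _ ha hb hab x => convex_stdSimplex ℝ A (h₁ x) (h₂ x) ha hb hab

theorem expLoss_smul_add_smul (pX : X → ℝ) (ℓ : X → A → ℝ) (W₁ W₂ : X → A → ℝ) (a b : ℝ) :
    expLoss pX ℓ (a • W₁ + b • W₂) = a * expLoss pX ℓ W₁ + b * expLoss pX ℓ W₂ := by
  simp only [expLoss, mul_sum, ← sum_add_distrib, Pi.add_apply, Pi.smul_apply, smul_eq_mul]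
  exact sum_congr rfl fun _ _ => sum_congr rfl fun _ _ => by ring

theorem convexOn_expLoss (pX : X → ℝ) (ℓ : X → A → ℝ) {s : Set (X → A → ℝ)}
    (hs : Convex ℝ s) : ConvexOn ℝ s (expLoss pX ℓ) :=
  ⟨hs, fun W₁ _ W₂ _ a b _ _ _ => (expLoss_smul_add_smul pX ℓ W₁ W₂ a b).le⟩

theorem expLoss_nonneg {pX : X → ℝ} (hpX : ∀ x, 0 ≤ pX x) {ℓ : X → A → ℝ}
    (hℓ : ∀ x a, 0 ≤ ℓ x a) {W : X → A → ℝ} (hW : IsChannel W) : 0 ≤ expLoss pX ℓ W :=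
  sum_nonneg fun x _ => sum_nonneg fun a _ =>
    mul_nonneg (mul_nonneg (hpX x) ((hW x).1 a)) (hℓ x a)

theorem mutualInfo_eq_sum (pX : X → ℝ) (W : X → A → ℝ) :
    mutualInfo pX W = ∑ x, ∑ a, pX x * W x a * log (W x a / ∑ x', pX x' * W x' a) := by
  refine sum_congr rfl fun x _ => sum_congr rfl fun a _ => ?_
  split_ifs with h
  · rw [h, zero_mul]
  · rfl

theorem mutualInfo_const {pX : X → ℝ} (hpX : ∑ x, pX x = 1) (r : A → ℝ) :
    mutualInfo pX (fun _ => r) = 0 := by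
  simp [mutualInfo_eq_sum, ← sum_mul, hpX]

theorem sum_mul_channel_pos {pX : X → ℝ} (hpX : ∀ x, 0 ≤ pX x) {W : X → A → ℝ}
    (hW : IsChannel W) {x : X} {a : A} (hx : 0 < pX x) (hW₀ : W x a ≠ 0) :
    0 < ∑ x', pX x' * W x' a :=
  (mul_pos hx (((hW x).1 a).lt_of_ne' hW₀)).trans_le
    (single_le_sum (fun x' _ => mul_nonneg (hpX x') ((hW x').1 a)) (mem_univ x))

theorem convexOn_mutualInfo {pX : X → ℝ} (hpX : ∀ x, 0 ≤ pX x) :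
    ConvexOn ℝ {W : X → A → ℝ | IsChannel W} (mutualInfo pX) := by
  refine ⟨convex_setOf_isChannel, fun W₁ h₁ W₂ h₂ a b ha hb _ => ?_⟩
  have hmarginal : ∀ y, ∑ x, pX x * (a • W₁ + b • W₂) x y
      = a * ∑ x, pX x * W₁ x y + b * ∑ x, pX x * W₂ x y := fun y => by
    simp only [mul_sum, ← sum_add_distrib, Pi.add_apply, Pi.smul_apply, smul_eq_mul]
    exact sum_congr rfl fun _ _ => by ring
  simp only [mutualInfo_eq_sum, hmarginal, smul_eq_mul]
  rw [mul_sum, mul_sum, ← sum_add_distrib]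
  refine sum_le_sum fun x _ => ?_
  rw [mul_sum, mul_sum, ← sum_add_distrib]
  refine sum_le_sum fun y _ => ?_
  rcases (hpX x).eq_or_lt with hx | hx
  · simp [← hx]
  have hterm := mul_le_mul_of_nonneg_left (mul_log_div_convex_combination ha hb ((h₁ x).1 y)
    ((h₂ x).1 y) (sum_nonneg fun x' _ => mul_nonneg (hpX x') ((h₁ x').1 y))
    (sum_nonneg fun x' _ => mul_nonneg (hpX x') ((h₂ x').1 y))
    (sum_mul_channel_pos hpX h₁ hx) (sum_mul_channel_pos hpX h₂ hx)) hx.le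
  simp only [Pi.add_apply, Pi.smul_apply, smul_eq_mul]
  linarith

end Channel

theorem shannonVoI_concave_general
    {X A : Type*} [Fintype X] [Fintype A] [Nonempty A]
    (pX : X → ℝ) (hpX : IsPMF pX)
    (ℓ : X → A → ℝ) (hℓ : ∀ x a, 0 ≤ ℓ x a)
    (R₁ R₂ : ℝ) (hR₁ : 0 ≤ R₁) (hR₂ : 0 ≤ R₂)
    (t : ℝ) (ht0 : 0 ≤ t) (ht1 : t ≤ 1) :
    t * shannonVoI pX ℓ R₁ + (1 - t) * shannonVoI pX ℓ R₂
      ≤ shannonVoI pX ℓ (t * R₁ + (1 - t) * R₂) := by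
  classical
  set W₀ : X → A → ℝ := fun _ => Pi.single (Classical.arbitrary A) 1
  have hW₀ : W₀ ∈ {W | IsChannel W} := fun _ => single_mem_stdSimplex ℝ _
  have hI₀ : mutualInfo pX W₀ = 0 := mutualInfo_const hpX.2 _
  have hconvex := (convexOn_mutualInfo hpX.1).sInf_image_sublevel
    (convexOn_expLoss pX ℓ convex_setOf_isChannel)
    ⟨0, forall_mem_image.2 fun W hW => expLoss_nonneg hpX.1 hℓ hW⟩ hW₀
  have hsInf := hconvex.2 (x := R₁) (y := R₂) (by simpa [hI₀]) (by simpa [hI₀]) ht0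
    (sub_nonneg.2 ht1) (add_sub_cancel t 1)
  simp only [smul_eq_mul, mem_ofPred_eq] at hsInf
  unfold shannonVoI
  linarith

theorem shannonVoI_concave
    {X A : Type*} [Fintype X] [Fintype A] [Nonempty X] [Nonempty A]
    (pX : X → ℝ) (hpX : IsPMF pX)
    (ℓ : X → A → ℝ) (hℓ : ∀ x a, 0 ≤ ℓ x a)
    (R₁ R₂ : ℝ) (hR₁ : 0 ≤ R₁) (hR₂ : 0 ≤ R₂)
    (t : ℝ) (ht0 : 0 ≤ t) (ht1 : t ≤ 1) :
    t * shannonVoI pX ℓ R₁ + (1 - t) * shannonVoI pX ℓ R₂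
      ≤ shannonVoI pX ℓ (t * R₁ + (1 - t) * R₂) :=
  shannonVoI_concave_general pX hpX ℓ hℓ R₁ R₂ hR₁ hR₂ t ht0 ht1
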